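/- Correctness of the p-CC-to-RX3C reduction for MAV: let A have size 3κ and ℋ be 3κ three-element subsets of A with each element in exactly three members. Build candidates C = {p, d₁, d₂, d₃, d₄} ∪ {c(H) : H ∈ ℋ}, votes v(a) = {c(H) : a ∈ H} for each a ∈ A, plus v₁ = {p, d₁, d₂} and v₂ = {p, d₃, d₄}, and set k = κ + 1. If ℋ contains an exact cover of A, then every MAV winning k-committee of (C, V) contains p; if ℋ contains no exact cover of A, then some MAV winning k-committee does not contain p. -/

import Mathlib

/-! For a committee `w` of size `κ + 1` and a vote `v` of size 3,
`|w \ v| + |v \ w| = κ + 4 - 2 |w ∩ v|`, so `w` has MAV score at most `κ + 2` if it meets every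
vote and exactly `κ + 4` otherwise. A committee meeting every vote has candidates `c(H)` covering
`A`, hence at least `κ` of them by double counting; it also meets `v₁` and `v₂`, so its one
remaining member must be `p`, and then its `κ` sets form an exact cover. Conversely an exact cover
together with `p` meets every vote. So with an exact cover every winner meets all votes and contains
`p`; without one every committee scores `κ + 4`, and any committee avoiding `p` wins. -/

namespace Stmt18

variable {α ι : Type*} [DecidableEq α] [DecidableEq ι] [Fintype ι]

/-- Candidates of the reduction: one candidate `c(H)` per member of `ℋ` (indexed by
`ι`), plus `p = Sum.inr 0` and dummies `d₁, d₂, d₃, d₄ = Sum.inr 1, …, Sum.inr 4`. -/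
abbrev Cand (ι : Type*) := ι ⊕ Fin 5

/-- The distinguished candidate `p`. -/
def p : Cand ι := Sum.inr 0

/-- The MAV score of a committee `w`. -/
def mavScore (V : Multiset (Finset (Cand ι))) (w : Finset (Cand ι)) : ℕ :=
  (V.map (fun v => (w \ v).card + (v \ w).card)).sup

/-- `w` is an MAV winning `k`-committee of the election `(C, V)`. -/
def mavWins (C : Finset (Cand ι)) (V : Multiset (Finset (Cand ι))) (k : ℕ)
    (w : Finset (Cand ι)) : Prop :=
  w ⊆ C ∧ w.card = k ∧ ∀ w' ⊆ C, w'.card = k → mavScore V w ≤ mavScore V w'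

/-- The vote `v(a)` for `a ∈ A`: it approves the candidates `c(H)` with `a ∈ H`. -/
def va (Hf : ι → Finset α) (a : α) : Finset (Cand ι) :=
  (Finset.univ.filter (fun i => a ∈ Hf i)).image Sum.inl

/-- The votes of the reduction: one vote `v(a)` per `a ∈ A`, plus `v₁ = {p, d₁, d₂}`
and `v₂ = {p, d₃, d₄}`. -/
def votes (A : Finset α) (Hf : ι → Finset α) : Multiset (Finset (Cand ι)) :=
  ({Sum.inr 0, Sum.inr 1, Sum.inr 2} : Finset (Cand ι)) ::ₘ
    ({Sum.inr 0, Sum.inr 3, Sum.inr 4} : Finset (Cand ι)) ::ₘ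
    A.val.map (va Hf)

end Stmt18

namespace Stmt18

open Finset

section MAV

variable {β : Type*} [DecidableEq β]

theorem card_sdiff_add_card_sdiff_add_two_mul_card_inter (s t : Finset β) :
    #(s \ t) + #(t \ s) + 2 * #(s ∩ t) = #s + #t := by
  have hs := card_sdiff_add_card_inter s t
  have ht := card_sdiff_add_card_inter t s
  rw [inter_comm] at ht
  omega

def MeetsAll (w : Finset β) (V : Multiset (Finset β)) : Prop :=
  ∀ v ∈ V, ¬Disjoint w v

variable {ι : Type*} [DecidableEq ι] {V : Multiset (Finset (Cand ι))} {w v : Finset (Cand ι)}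
  {r n : ℕ}

theorem mavScore_le_iff : mavScore V w ≤ n ↔ ∀ v ∈ V, #(w \ v) + #(v \ w) ≤ n := by
  simp [mavScore]

theorem le_mavScore (hv : v ∈ V) : #(w \ v) + #(v \ w) ≤ mavScore V w :=
  Multiset.le_sup (Multiset.mem_map_of_mem _ hv)

theorem mavScore_le_card_add (hV : ∀ v ∈ V, #v ≤ r) : mavScore V w ≤ #w + r :=
  mavScore_le_iff.2 fun v hv => by
    have := card_sdiff_add_card_sdiff_add_two_mul_card_inter w v
    have := hV v hv
    omega

theorem mavScore_le_of_meetsAll (hV : ∀ v ∈ V, #v ≤ r) (h : MeetsAll w V) :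
    mavScore V w ≤ #w + r - 2 :=
  mavScore_le_iff.2 fun v hv => by
    have hmeet : 0 < #(w ∩ v) := card_pos.2 (not_disjoint_iff_nonempty_inter.1 (h v hv))
    have := card_sdiff_add_card_sdiff_add_two_mul_card_inter w v
    have := hV v hv
    omega

theorem meetsAll_of_mavScore_lt (hV : ∀ v ∈ V, #v = r) (h : mavScore V w < #w + r) :
    MeetsAll w V := fun v hv hdisj => by
  have := le_mavScore (w := w) hv
  rw [sdiff_eq_self_of_disjoint hdisj, sdiff_eq_self_of_disjoint hdisj.symm, hV v hv] at this
  omega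

end MAV

section ExactCover

variable {α ι : Type*} [DecidableEq α] {A : Finset α} {Hf : ι → Finset α} {T : Finset ι} {κ : ℕ}

def IsExactCover (A : Finset α) (Hf : ι → Finset α) (T : Finset ι) : Prop :=
  ∀ a ∈ A, ∃! i, i ∈ T ∧ a ∈ Hf i

theorem isExactCover_iff : IsExactCover A Hf T ↔ ∀ a ∈ A, #{i ∈ T | a ∈ Hf i} = 1 := by
  simp only [IsExactCover, card_eq_one_iff_existsUnique, mem_filter]

theorem sum_card_filter_mem_eq {r : ℕ} (hH : ∀ i, #(Hf i) = r) (hHA : ∀ i, Hf i ⊆ A)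
    (T : Finset ι) : ∑ a ∈ A, #{i ∈ T | a ∈ Hf i} = r * #T := by
  calc ∑ a ∈ A, #{i ∈ T | a ∈ Hf i} = ∑ a ∈ A, #(T.bipartiteAbove (· ∈ Hf ·) a) := rfl
    _ = ∑ i ∈ T, #(A.bipartiteBelow (· ∈ Hf ·) i) :=
      sum_card_bipartiteAbove_eq_sum_card_bipartiteBelow _
    _ = r * #T := by
      rw [sum_const_nat fun i _ => by
        rw [bipartiteBelow, filter_mem_eq_inter, inter_eq_right.2 (hHA i), hH i], mul_comm]

theorem one_le_card_filter_of_covers (hcov : ∀ a ∈ A, ∃ i ∈ T, a ∈ Hf i) :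
    ∀ a ∈ A, 1 ≤ #{i ∈ T | a ∈ Hf i} := fun a ha =>
  card_pos.2 (filter_nonempty_iff.2 (hcov a ha))

variable (hA : #A = 3 * κ) (hH3 : ∀ i, #(Hf i) = 3) (hHA : ∀ i, Hf i ⊆ A)
include hA hH3 hHA

theorem IsExactCover.card_eq (hT : IsExactCover A Hf T) : #T = κ := by
  have := sum_card_filter_mem_eq hH3 hHA T
  rw [sum_congr rfl (isExactCover_iff.1 hT), sum_const, smul_eq_mul, mul_one, hA] at this
  omega

theorem le_card_of_covers (hcov : ∀ a ∈ A, ∃ i ∈ T, a ∈ Hf i) : κ ≤ #T := by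
  have := sum_le_sum (one_le_card_filter_of_covers hcov)
  rw [sum_card_filter_mem_eq hH3 hHA T, sum_const, smul_eq_mul, mul_one, hA] at this
  omega

theorem isExactCover_of_covers (hcov : ∀ a ∈ A, ∃ i ∈ T, a ∈ Hf i) (hTκ : #T ≤ κ) :
    IsExactCover A Hf T := by
  have h1 := one_le_card_filter_of_covers hcov
  have hsum : ∑ a ∈ A, 1 = ∑ a ∈ A, #{i ∈ T | a ∈ Hf i} := by
    rw [sum_card_filter_mem_eq hH3 hHA T, sum_const, smul_eq_mul, mul_one, hA]
    have := le_card_of_covers hA hH3 hHA hcov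
    omega
  exact isExactCover_iff.2 fun a ha => ((sum_eq_sum_iff_of_le h1).1 hsum a ha).symm

end ExactCover

variable {α ι : Type*} [DecidableEq α] [DecidableEq ι] [Fintype ι]

section Votes

variable {A : Finset α} {Hf : ι → Finset α} {w : Finset (Cand ι)}

theorem card_of_mem_votes (hocc : ∀ a ∈ A, #{i | a ∈ Hf i} = 3) :
    ∀ v ∈ votes A Hf, #v = 3 := by
  simp only [votes, Multiset.forall_mem_cons, Multiset.forall_mem_map_iff, mem_val]
  refine ⟨rfl, rfl, fun a ha => ?_⟩
  rw [va, card_image_of_injective _ Sum.inl_injective, hocc a ha]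

theorem not_disjoint_va_iff {a : α} : ¬Disjoint w (va Hf a) ↔ ∃ i ∈ w.toLeft, a ∈ Hf i := by
  simp [va, not_disjoint_iff]

theorem meetsAll_votes_iff :
    MeetsAll w (votes A Hf) ↔
      (0 ∈ w.toRight ∨ 1 ∈ w.toRight ∨ 2 ∈ w.toRight) ∧
        (0 ∈ w.toRight ∨ 3 ∈ w.toRight ∨ 4 ∈ w.toRight) ∧ ∀ a ∈ A, ∃ i ∈ w.toLeft, a ∈ Hf i := by
  simp only [MeetsAll, votes, Multiset.forall_mem_cons, Multiset.forall_mem_map_iff, mem_val,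
    not_disjoint_va_iff, disjoint_insert_right, disjoint_singleton_right, not_and_or, not_not,
    mem_toRight]

theorem meetsAll_votes_of_isExactCover {T : Finset ι} (hT : IsExactCover A Hf T) :
    MeetsAll (T.disjSum {0}) (votes A Hf) := by
  refine meetsAll_votes_iff.2 ⟨by simp, by simp, fun a ha => ?_⟩
  obtain ⟨i, ⟨hiT, hai⟩, -⟩ := hT a ha
  exact ⟨i, by simpa using hiT, hai⟩

theorem p_mem_and_isExactCover_of_meetsAll {κ : ℕ} (hA : #A = 3 * κ) (hH3 : ∀ i, #(Hf i) = 3)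
    (hHA : ∀ i, Hf i ⊆ A) (hw : #w = κ + 1) (h : MeetsAll w (votes A Hf)) :
    p ∈ w ∧ IsExactCover A Hf w.toLeft := by
  obtain ⟨h₁, h₂, hcov⟩ := meetsAll_votes_iff.1 h
  have hsplit : #w.toLeft + #w.toRight = κ + 1 := hw ▸ card_toLeft_add_card_toRight
  have hleft := le_card_of_covers hA hH3 hHA hcov
  have hp : 0 ∈ w.toRight := by
    by_contra hp
    have : 1 < #w.toRight := by
      rcases h₁ with h | h | h <;> rcases h₂ with h' | h' | h' <;>
        first | contradiction | exact one_lt_card_iff.2 ⟨_, _, h, h', by decide⟩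
    omega
  refine ⟨mem_toRight.1 hp, isExactCover_of_covers hA hH3 hHA hcov ?_⟩
  have := card_pos.2 ⟨0, hp⟩
  omega

end Votes

theorem pcc_mav_rx3c_correct_general
    (κ : ℕ) (A : Finset α) (hA : A.card = 3 * κ)
    (Hf : ι → Finset α) (hι : Fintype.card ι = 3 * κ)
    (hH3 : ∀ i, (Hf i).card = 3) (hHA : ∀ i, Hf i ⊆ A)
    (hocc : ∀ a ∈ A, (Finset.univ.filter (fun i => a ∈ Hf i)).card = 3)
    (C : Finset (Cand ι)) (hC : C = Finset.univ) :
    ((∃ T : Finset ι, ∀ a ∈ A, ∃! i, i ∈ T ∧ a ∈ Hf i) →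
      ∀ w, mavWins C (votes A Hf) (κ + 1) w → p ∈ w) ∧
    ((¬ ∃ T : Finset ι, ∀ a ∈ A, ∃! i, i ∈ T ∧ a ∈ Hf i) →
      ∃ w, mavWins C (votes A Hf) (κ + 1) w ∧ p ∉ w) := by
  subst hC
  have hV := card_of_mem_votes hocc
  have hwin {w} (hw : #w = κ + 1) (hlt : mavScore (votes A Hf) w < κ + 4) :
      p ∈ w ∧ IsExactCover A Hf w.toLeft :=
    p_mem_and_isExactCover_of_meetsAll hA hH3 hHA hw (meetsAll_of_mavScore_lt hV (by omega))
  refine ⟨fun ⟨T, hT⟩ w ⟨_, hw, hmin⟩ => (hwin hw ?_).1, fun hno => ?_⟩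
  · have hw₀ : #(T.disjSum {0} : Finset (Cand ι)) = κ + 1 := by
      rw [card_disjSum, IsExactCover.card_eq hA hH3 hHA hT, card_singleton]
    calc mavScore (votes A Hf) w ≤ mavScore (votes A Hf) (T.disjSum {0}) :=
          hmin _ (subset_univ _) hw₀
      _ ≤ #(T.disjSum {0} : Finset (Cand ι)) + 3 - 2 :=
          mavScore_le_of_meetsAll (fun v hv => (hV v hv).le) (meetsAll_votes_of_isExactCover hT)
      _ < κ + 4 := by omega
  · obtain ⟨w, hwp, hw⟩ := exists_subset_card_eq (s := univ.erase (p : Cand ι)) (n := κ + 1) (by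
      rw [card_erase_of_mem (mem_univ _), card_univ, Fintype.card_sum, hι, Fintype.card_fin]
      omega)
    refine ⟨w, ⟨subset_univ w, hw, fun w' _ hw' => ?_⟩, fun hpw => (mem_erase.1 (hwp hpw)).1 rfl⟩
    by_contra! hlt
    have := mavScore_le_card_add (w := w) fun v hv => (hV v hv).le
    exact hno ⟨_, (hwin hw' (by omega)).2⟩

/-- Correctness of the p-CC-to-RX3C reduction for MAV with `k = κ + 1`: if `ℋ`
contains an exact cover of `A` then every MAV winning `(κ+1)`-committee contains
`p`; if `ℋ` contains no exact cover of `A` then some MAV winning `(κ+1)`-committee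
does not contain `p`. -/
theorem pcc_mav_rx3c_correct
    (κ : ℕ) (hκ : 1 ≤ κ) (A : Finset α) (hA : A.card = 3 * κ)
    (Hf : ι → Finset α) (hι : Fintype.card ι = 3 * κ)
    (hH3 : ∀ i, (Hf i).card = 3) (hHA : ∀ i, Hf i ⊆ A)
    (hocc : ∀ a ∈ A, (Finset.univ.filter (fun i => a ∈ Hf i)).card = 3)
    (C : Finset (Cand ι)) (hC : C = Finset.univ) :
    ((∃ T : Finset ι, ∀ a ∈ A, ∃! i, i ∈ T ∧ a ∈ Hf i) →
      ∀ w, mavWins C (votes A Hf) (κ + 1) w → p ∈ w) ∧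
    ((¬ ∃ T : Finset ι, ∀ a ∈ A, ∃! i, i ∈ T ∧ a ∈ Hf i) →
      ∃ w, mavWins C (votes A Hf) (κ + 1) w ∧ p ∉ w) :=
  pcc_mav_rx3c_correct_general κ A hA Hf hι hH3 hHA hocc C hC

end Stmt18
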